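/- arXiv:2001.00961 — 2 statements merged into one kernel-verified Lean document; each statement's English description precedes it below -/
import Mathlib

section
/- Let A be a Green biset functor, G a finite group, κ_G = ker(Res: A_G → A). If S is a simple A_G-module not annihilated by the ideal κ_G, and H is a minimal group for S, then S(H) is a simple quotient of κ̂_G(H) as Â_G(H)-modules, where κ̂_G(H) is the image of κ_G(H×H) in the essential algebra Â_G(H). -/
/-! A framework for Green biset functors.

Since the biset category is not available in Mathlib, we axiomatize it as a
structure `BisetCat k`: a `k`-linear category whose objects are (bundled) finite
groups, equipped with external products of morphisms and with the distinguished
morphisms coming from group homomorphisms (covariantly: induction, deflation,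
transport along isomorphisms; contravariantly: restriction and inflation),
subject to the standard relations.  A Green biset functor is then given by data
`GreenFunData` subject to the axioms `GreenFunData.IsGreen` (Bouc's axioms:
associativity, identity and functoriality of the bilinear products). -/

/-- A bundled finite group: an object of the biset category. -/
structure FGrp : Type 1 where
  carrier : Type
  [grp : Group carrier]
  [fin : Finite carrier]

attribute [instance] FGrp.grp FGrp.fin

/-- The product of two objects. -/
def FGrp.prod (G H : FGrp) : FGrp := ⟨G.carrier × H.carrier⟩

/-- The trivial group as an object. -/
def FGrp.unit : FGrp := ⟨PUnit⟩

/-- The order of (the group underlying) an object. -/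
noncomputable def FGrp.card (G : FGrp) : ℕ := Nat.card G.carrier

/-- The diagonal homomorphism `H → H × H`. -/
def FGrp.diag (G : FGrp) : G.carrier →* (G.prod G).carrier :=
  (MonoidHom.id G.carrier).prod (MonoidHom.id G.carrier)

/-- The unique homomorphism `H → 1`. -/
def FGrp.toUnit (G : FGrp) : G.carrier →* FGrp.unit.carrier := 1

/-- The canonical isomorphism `G × (H × L) ≅ (G × H) × L` as a homomorphism. -/
def FGrp.assocHom (G H L : FGrp) :
    (G.prod (H.prod L)).carrier →* ((G.prod H).prod L).carrier :=
  MonoidHom.mk' (fun p => ((p.1, p.2.1), p.2.2)) (by intro a b; rfl)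

/-- The canonical isomorphism `(G × H) × L ≅ G × (H × L)` as a homomorphism. -/
def FGrp.assocHom' (G H L : FGrp) :
    ((G.prod H).prod L).carrier →* (G.prod (H.prod L)).carrier :=
  MonoidHom.mk' (fun p => (p.1.1, (p.1.2, p.2))) (by intro a b; rfl)

/-- The canonical isomorphism `1 × H ≅ H` as a homomorphism. -/
def FGrp.lUnitHom (H : FGrp) : (FGrp.unit.prod H).carrier →* H.carrier :=
  MonoidHom.snd _ _

/-- The canonical isomorphism `H × 1 ≅ H` as a homomorphism. -/
def FGrp.rUnitHom (H : FGrp) : (H.prod FGrp.unit).carrier →* H.carrier :=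
  MonoidHom.fst _ _

/-- Its inverse `H ≅ H × 1`. -/
def FGrp.rUnitInv (H : FGrp) : H.carrier →* (H.prod FGrp.unit).carrier :=
  (MonoidHom.id H.carrier).prod 1

/-- The (k-linearized) biset category, axiomatized: hom-`k`-modules `Mor G H`
(playing the role of `k ⊗ B(H,G)`), bilinear composition, identities, external
products `prodMor` of morphisms, and the distinguished morphisms `toHom ψ`
(the biset `_{G^ψ}H_H`, covering restriction and inflation) and `fromHom ψ`
(the biset `_HH_{^ψG}`, covering induction, deflation and transport along
isomorphisms) attached to a group homomorphism `ψ : G → H`, with the standard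
relations among them. -/
structure BisetCat (k : Type) [CommRing k] : Type 1 where
  Mor : FGrp → FGrp → Type
  instAdd : ∀ G H, AddCommGroup (Mor G H)
  instMod : ∀ G H, Module k (Mor G H)
  comp : ∀ {G H L}, Mor H L → Mor G H → Mor G L
  one : ∀ G, Mor G G
  comp_assoc : ∀ {G H L M} (f : Mor L M) (g : Mor H L) (h : Mor G H),
    comp (comp f g) h = comp f (comp g h)
  comp_one : ∀ {G H} (f : Mor G H), comp f (one G) = f
  one_comp : ∀ {G H} (f : Mor G H), comp (one H) f = f
  comp_add : ∀ {G H L} (f f' : Mor H L) (g : Mor G H),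
    comp (f + f') g = comp f g + comp f' g
  add_comp : ∀ {G H L} (f : Mor H L) (g g' : Mor G H),
    comp f (g + g') = comp f g + comp f g'
  comp_smul : ∀ {G H L} (c : k) (f : Mor H L) (g : Mor G H),
    comp (c • f) g = c • comp f g
  smul_comp : ∀ {G H L} (c : k) (f : Mor H L) (g : Mor G H),
    comp f (c • g) = c • comp f g
  prodMor : ∀ {G G' H H'}, Mor G G' → Mor H H' → Mor (G.prod H) (G'.prod H')
  prodMor_one : ∀ G H, prodMor (one G) (one H) = one (G.prod H)
  prodMor_comp : ∀ {G G' G'' H H' H''} (f : Mor G' G'') (g : Mor G G')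
    (f' : Mor H' H'') (g' : Mor H H'),
    prodMor (comp f g) (comp f' g') = comp (prodMor f f') (prodMor g g')
  toHom : ∀ {G H : FGrp}, (G.carrier →* H.carrier) → Mor H G
  fromHom : ∀ {G H : FGrp}, (G.carrier →* H.carrier) → Mor G H
  toHom_id : ∀ G, toHom (MonoidHom.id G.carrier) = one G
  fromHom_id : ∀ G, fromHom (MonoidHom.id G.carrier) = one G
  toHom_comp : ∀ {G H L : FGrp} (ψ : G.carrier →* H.carrier) (φ : H.carrier →* L.carrier),
    toHom (φ.comp ψ) = comp (toHom ψ) (toHom φ)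
  fromHom_comp : ∀ {G H L : FGrp} (ψ : G.carrier →* H.carrier) (φ : H.carrier →* L.carrier),
    fromHom (φ.comp ψ) = comp (fromHom φ) (fromHom ψ)
  prodMor_toHom : ∀ {G G' H H' : FGrp} (ψ : G.carrier →* G'.carrier) (φ : H.carrier →* H'.carrier),
    prodMor (toHom ψ) (toHom φ) = toHom (ψ.prodMap φ)
  prodMor_fromHom : ∀ {G G' H H' : FGrp} (ψ : G.carrier →* G'.carrier) (φ : H.carrier →* H'.carrier),
    prodMor (fromHom ψ) (fromHom φ) = fromHom (ψ.prodMap φ)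

attribute [instance] BisetCat.instAdd BisetCat.instMod

variable {k : Type} [CommRing k]

namespace BisetCat

/-- The biset `→K` (i.e. `K` as a `(K×K,1)`-biset), as the morphism
`Ind^{K×K}_{ΔK} ∘ Inf^{ΔK}_1 : 1 ⟶ K × K`. -/
def arrowR (B : BisetCat k) (K : FGrp) : B.Mor FGrp.unit (K.prod K) :=
  B.comp (B.fromHom K.diag) (B.toHom K.toUnit)

/-- The biset `←K` (the opposite of `→K`), as the morphism
`Def ∘ Res : K × K ⟶ 1`. -/
def arrowL (B : BisetCat k) (K : FGrp) : B.Mor (K.prod K) FGrp.unit :=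
  B.comp (B.fromHom K.toUnit) (B.toHom K.diag)

end BisetCat

/-- The data of a Green biset functor over the biset category `B`: `k`-modules
`obj G = A(G)`, maps `A(f)` for morphisms `f` of `B`, bilinear products
`prod : A(G) × A(H) → A(G × H)` and a unit `eps ∈ A(1)`. -/
structure GreenFunData (k : Type) [CommRing k] (B : BisetCat k) : Type 1 where
  obj : FGrp → Type
  instAdd : ∀ G, AddCommGroup (obj G)
  instMod : ∀ G, Module k (obj G)
  map : ∀ {G H}, B.Mor G H → obj G → obj H
  prod : ∀ {G H}, obj G → obj H → obj (G.prod H)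
  eps : obj FGrp.unit

attribute [instance] GreenFunData.instAdd GreenFunData.instMod

namespace GreenFunData

variable {B : BisetCat k}

/-- Bouc's axioms for a Green biset functor: `map` makes `A` a `k`-linear functor
on `B`, the products are bilinear, associative and unital (via the canonical
isomorphisms) and functorial ("Frobenius/tensor" axiom). -/
structure IsGreen (A : GreenFunData k B) : Prop where
  map_add : ∀ {G H} (f : B.Mor G H) (a b : A.obj G), A.map f (a + b) = A.map f a + A.map f b
  map_smul : ∀ {G H} (f : B.Mor G H) (c : k) (a : A.obj G), A.map f (c • a) = c • A.map f a
  add_map : ∀ {G H} (f g : B.Mor G H) (a : A.obj G), A.map (f + g) a = A.map f a + A.map g a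
  smul_map : ∀ {G H} (c : k) (f : B.Mor G H) (a : A.obj G), A.map (c • f) a = c • A.map f a
  map_one : ∀ {G} (a : A.obj G), A.map (B.one G) a = a
  map_comp : ∀ {G H L} (g : B.Mor H L) (f : B.Mor G H) (a : A.obj G),
    A.map (B.comp g f) a = A.map g (A.map f a)
  prod_add_left : ∀ {G H} (a a' : A.obj G) (b : A.obj H),
    A.prod (a + a') b = A.prod a b + A.prod a' b
  prod_add_right : ∀ {G H} (a : A.obj G) (b b' : A.obj H),
    A.prod a (b + b') = A.prod a b + A.prod a b'
  prod_smul_left : ∀ {G H} (c : k) (a : A.obj G) (b : A.obj H),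
    A.prod (c • a) b = c • A.prod a b
  prod_smul_right : ∀ {G H} (c : k) (a : A.obj G) (b : A.obj H),
    A.prod a (c • b) = c • A.prod a b
  prod_assoc : ∀ {G H L} (a : A.obj G) (b : A.obj H) (c : A.obj L),
    A.prod (A.prod a b) c = A.map (B.fromHom (FGrp.assocHom G H L)) (A.prod a (A.prod b c))
  prod_lunit : ∀ {H} (a : A.obj H), A.map (B.fromHom (FGrp.lUnitHom H)) (A.prod A.eps a) = a
  prod_runit : ∀ {H} (a : A.obj H), A.map (B.fromHom (FGrp.rUnitHom H)) (A.prod a A.eps) = a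
  prod_map : ∀ {G G' H H'} (α : B.Mor G G') (β : B.Mor H H') (a : A.obj G) (b : A.obj H),
    A.map (B.prodMor α β) (A.prod a b) = A.prod (A.map α a) (A.map β b)

variable (A : GreenFunData k B)

/-- Hom-sets of the associated category `𝒫_A`: `𝒫_A(G,H) = A(H × G)`. -/
abbrev pHom (G H : FGrp) : Type := A.obj (H.prod G)

/-- The morphism `L × ←K × H : (L×K)×(K×H) ⟶ L×H` of `B` used to define
composition in the associated category. -/
def midMor (B : BisetCat k) (L K H : FGrp) :
    B.Mor ((L.prod K).prod (K.prod H)) (L.prod H) :=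
  B.comp (B.fromHom (MonoidHom.mk' (fun p : L.carrier × PUnit × H.carrier => (p.1, p.2.2))
      (by intro a b; rfl)))
    (B.comp (B.prodMor (B.one L) (B.prodMor (B.arrowL K) (B.one H)))
      (B.fromHom (MonoidHom.mk'
        (fun p : (L.carrier × K.carrier) × K.carrier × H.carrier =>
          (p.1.1, ((p.1.2, p.2.1), p.2.2))) (by intro a b; rfl))))

/-- Composition in the associated category `𝒫_A`: `β ∘ α = A(L × ←K × H)(β × α)`. -/
def pComp {H K L : FGrp} (β : A.pHom K L) (α : A.pHom H K) : A.pHom H L :=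
  A.map (midMor B L K H) (A.prod β α)

/-- Identities of the associated category `𝒫_A`: `Id_H = A(→H)(ε)`. -/
def pId (H : FGrp) : A.pHom H H := A.map (B.arrowR H) A.eps

/-- The ideal `I_A(H)` of `End_{𝒫_A}(H)`: the `k`-submodule generated by the
endomorphisms of `H` factoring through a group of order `< |H|`. -/
def essIdeal (H : FGrp) : Submodule k (A.pHom H H) :=
  Submodule.span k
    {f | ∃ (K : FGrp), K.card < H.card ∧ ∃ (g : A.pHom H K) (h : A.pHom K H), f = A.pComp h g}

end GreenFunData

/-! Morphisms of Green biset functors, the Yoneda–Dress (shifted) construction,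
and the inflation and restriction morphisms between `A` and `A_G`. -/

/-- A family `app : A(G) → C(G)` is a morphism of Green biset functors if it is
`k`-linear, natural with respect to bisets, multiplicative for the external
products, and unital. -/
structure IsGreenMor {k : Type} [CommRing k] {B : BisetCat k}
    (A C : GreenFunData k B) (app : ∀ G : FGrp, A.obj G → C.obj G) : Prop where
  app_add : ∀ (G : FGrp) (a b : A.obj G), app G (a + b) = app G a + app G b
  app_smul : ∀ (G : FGrp) (c : k) (a : A.obj G), app G (c • a) = c • app G a
  naturality : ∀ {G H : FGrp} (f : B.Mor G H) (a : A.obj G),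
    app H (A.map f a) = C.map f (app G a)
  app_prod : ∀ {G H : FGrp} (a : A.obj G) (b : A.obj H),
    app (G.prod H) (A.prod a b) = C.prod (app G a) (app H b)
  app_eps : app FGrp.unit A.eps = C.eps

namespace GreenFunData

variable {k : Type} [CommRing k] {B : BisetCat k}

/-- The twisted diagonal homomorphism `(K×H)×G → (K×G)×(H×G)` defining the
products of the shifted functor. -/
def shiftDiag (K H G₀ : FGrp) :
    ((K.prod H).prod G₀).carrier →* ((K.prod G₀).prod (H.prod G₀)).carrier :=
  MonoidHom.mk' (fun p => ((p.1.1, p.2), (p.1.2, p.2))) (by intro a b; rfl)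

/-- The Yoneda–Dress construction (shift) `A_{G₀}` of `A` at `G₀`:
`A_{G₀}(H) = A(H × G₀)`, `A_{G₀}(α) = A(α × Id_{G₀})`, with products
`a ×ᵈ b = A(twisted diagonal restriction)(a × b)` and unit `A(Inf^{1×G₀}_1)(ε)`. -/
def shift (A : GreenFunData k B) (G₀ : FGrp) : GreenFunData k B where
  obj H := A.obj (H.prod G₀)
  instAdd _ := A.instAdd _
  instMod _ := A.instMod _
  map {_ _} α := A.map (B.prodMor α (B.one G₀))
  prod {K H} a b := A.map (B.toHom (shiftDiag K H G₀)) (A.prod a b)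
  eps := A.map (B.toHom (FGrp.toUnit (FGrp.unit.prod G₀))) A.eps

/-- The inflation morphism `Inf : A → A_{G₀}`, with components
`A(Inf^{H×G₀}_H) : A(H) → A(H×G₀)` (inflation along the projection `H×G₀ → H`). -/
def infApp (A : GreenFunData k B) (G₀ : FGrp) :
    ∀ H : FGrp, A.obj H → (A.shift G₀).obj H :=
  fun H a => A.map (B.toHom (MonoidHom.fst H.carrier G₀.carrier)) a

/-- The restriction morphism `Res : A_{G₀} → A`, with components
`A(Res^{H×G₀}_H) : A(H×G₀) → A(H)` (restriction along `H ≅ H×1 ≤ H×G₀`). -/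
def resApp (A : GreenFunData k B) (G₀ : FGrp) :
    ∀ H : FGrp, (A.shift G₀).obj H → A.obj H :=
  fun H x => A.map (B.toHom ((MonoidHom.id H.carrier).prod (1 : H.carrier →* G₀.carrier))) x

/-- The left action of `A` on itself: for `α ∈ A(K×H)` and `a ∈ A(H)`,
`α · a = A(K × ←H)(α × a)`. -/
def lact (A : GreenFunData k B) {K H : FGrp} (α : A.obj (K.prod H)) (a : A.obj H) :
    A.obj K :=
  A.map (B.comp (B.fromHom (FGrp.rUnitHom K))
      (B.comp (B.prodMor (B.one K) (B.arrowL H)) (B.fromHom (FGrp.assocHom' K H H))))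
    (A.prod α a)

end GreenFunData

/-! Modules over a Green biset functor: `k`-linear functors on the associated
category `𝒫_A`. -/

namespace GreenFunData

variable {k : Type} [CommRing k] {B : BisetCat k}

/-- The data of a module over the Green biset functor `A`: `k`-modules `M(H)`
and an action map `M(α) : M(G) → M(H)` for every `α ∈ 𝒫_A(G,H) = A(H×G)`. -/
structure ModData (A : GreenFunData k B) : Type 1 where
  obj : FGrp → Type
  instAdd : ∀ G, AddCommGroup (obj G)
  instMod : ∀ G, Module k (obj G)
  act : ∀ {G H : FGrp}, A.pHom G H → obj G → obj H

attribute [instance] ModData.instAdd ModData.instMod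

/-- The axioms making `M` an `A`-module, i.e. a `k`-linear functor `𝒫_A → k`-Mod. -/
structure ModData.IsMod {A : GreenFunData k B} (M : ModData A) : Prop where
  act_add : ∀ {G H : FGrp} (α : A.pHom G H) (m m' : M.obj G),
    M.act α (m + m') = M.act α m + M.act α m'
  act_smul : ∀ {G H : FGrp} (α : A.pHom G H) (c : k) (m : M.obj G),
    M.act α (c • m) = c • M.act α m
  add_act : ∀ {G H : FGrp} (α α' : A.pHom G H) (m : M.obj G),
    M.act (α + α') m = M.act α m + M.act α' m
  smul_act : ∀ {G H : FGrp} (c : k) (α : A.pHom G H) (m : M.obj G),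
    M.act (c • α) m = c • M.act α m
  act_id : ∀ {H : FGrp} (m : M.obj H), M.act (A.pId H) m = m
  act_comp : ∀ {G H L : FGrp} (β : A.pHom H L) (α : A.pHom G H) (m : M.obj G),
    M.act (A.pComp β α) m = M.act β (M.act α m)

/-- The pullback of a `C`-module `M` along a morphism of Green biset functors
`f : A → C`: same evaluations, with `α` acting through `f(α)`. -/
def pullMod {A C : GreenFunData k B} (f : ∀ G : FGrp, A.obj G → C.obj G)
    (M : ModData C) : ModData A where
  obj := M.obj
  instAdd := M.instAdd
  instMod := M.instMod
  act {G H} α m := M.act (f (H.prod G) α) m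

/-- A morphism of `A`-modules: a `k`-linear natural family `φ_H : M(H) → N(H)`. -/
structure IsModMor {A : GreenFunData k B} (M N : ModData A)
    (φ : ∀ H : FGrp, M.obj H → N.obj H) : Prop where
  map_add : ∀ (H : FGrp) (m m' : M.obj H), φ H (m + m') = φ H m + φ H m'
  map_smul : ∀ (H : FGrp) (c : k) (m : M.obj H), φ H (c • m) = c • φ H m
  equivariant : ∀ {G H : FGrp} (α : A.pHom G H) (m : M.obj G),
    φ H (M.act α m) = N.act α (φ G m)

end GreenFunData

/-! Restriction `Res : A_{G₀} → A` is a morphism of Green functors, so its kernel `κ_{G₀}` is a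
two-sided ideal of the category `𝒫_{A_{G₀}}`. Since `H` is minimal, every endomorphism of `H`
factoring through a smaller group kills `S(H)`. Any `s ≠ 0` in `S(H)` generates the simple
module `S`, so `κ_{G₀} · s` is a subfunctor of `S`; it is nonzero because `κ_{G₀}` does not
annihilate `S`, hence it is all of `S`, and at `H` this says `κ_{G₀}(H×H) · s = S(H)`. -/

namespace BisetCat

/-- `Res^{W×G₀}_W`, the restriction along `W ≅ W×1 ≤ W×G₀`, so that
`A.resApp G₀ W = A.map (B.resMor G₀ W)`. -/
def resMor (B : BisetCat k) (G₀ W : FGrp) : B.Mor (W.prod G₀) W :=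
  B.toHom ((MonoidHom.id W.carrier).prod 1)

/-- Restriction to `W ≅ W×1` commutes past the twisted diagonal: it can be performed on
both factors first. -/
lemma exists_resMor_comp_prodMor_comp_shiftDiag (B : BisetCat k) (G₀ X₁ X₂ W : FGrp)
    (f : B.Mor (X₁.prod X₂) W) :
    ∃ g : B.Mor (X₁.prod X₂) W,
      B.comp (B.comp (B.resMor G₀ W) (B.prodMor f (B.one G₀)))
          (B.toHom (GreenFunData.shiftDiag X₁ X₂ G₀)) =
        B.comp g (B.prodMor (B.resMor G₀ X₁) (B.resMor G₀ X₂)) := by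
  set u : B.Mor G₀ FGrp.unit := B.toHom 1
  have hW : B.resMor G₀ W = B.comp (B.toHom (FGrp.rUnitInv W)) (B.prodMor (B.one W) u) := by
    erw [← B.toHom_id W, B.prodMor_toHom, ← B.toHom_comp]
    rfl
  have hX : B.comp (B.prodMor (B.one (X₁.prod X₂)) u)
        (B.toHom (GreenFunData.shiftDiag X₁ X₂ G₀)) =
      B.comp (B.toHom (FGrp.rUnitHom (X₁.prod X₂)))
        (B.prodMor (B.resMor G₀ X₁) (B.resMor G₀ X₂)) := by
    erw [← B.toHom_id (X₁.prod X₂), B.prodMor_toHom, ← B.toHom_comp, B.prodMor_toHom,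
      ← B.toHom_comp]
    rfl
  have hf : B.comp (B.prodMor (B.one W) u) (B.prodMor f (B.one G₀)) =
      B.comp (B.prodMor f (B.one FGrp.unit)) (B.prodMor (B.one (X₁.prod X₂)) u) := by
    rw [← B.prodMor_comp, ← B.prodMor_comp, B.one_comp, B.comp_one, B.one_comp, B.comp_one]
  refine ⟨B.comp (B.comp (B.toHom (FGrp.rUnitInv W)) (B.prodMor f (B.one FGrp.unit)))
    (B.toHom (FGrp.rUnitHom (X₁.prod X₂))), ?_⟩
  simp only [hW, B.comp_assoc]
  rw [← B.comp_assoc (B.prodMor (B.one W) u), hf, B.comp_assoc, hX]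

end BisetCat

namespace GreenFunData

variable {B : BisetCat k}

namespace IsGreen

variable {A : GreenFunData k B} (hA : A.IsGreen)
include hA

def mapLinear {G H : FGrp} (f : B.Mor G H) : A.obj G →ₗ[k] A.obj H where
  toFun := A.map f
  map_add' := hA.map_add f
  map_smul' := hA.map_smul f

lemma map_zero {G H : FGrp} (f : B.Mor G H) : A.map f 0 = 0 :=
  (hA.mapLinear f).map_zero

lemma zero_prod {G H : FGrp} (b : A.obj H) : A.prod (0 : A.obj G) b = 0 := by
  simpa using hA.prod_smul_left 0 0 b

lemma prod_zero {G H : FGrp} (a : A.obj G) : A.prod a (0 : A.obj H) = 0 := by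
  simpa using hA.prod_smul_right 0 a 0

lemma exists_resApp_pComp_eq_map_prod (G₀ : FGrp) {H K L : FGrp}
    (β : (A.shift G₀).pHom K L) (α : (A.shift G₀).pHom H K) :
    ∃ g : B.Mor ((L.prod K).prod (K.prod H)) (L.prod H),
      A.resApp G₀ (L.prod H) ((A.shift G₀).pComp β α) =
        A.map g (A.prod (A.resApp G₀ (L.prod K) β) (A.resApp G₀ (K.prod H) α)) := by
  obtain ⟨g, hg⟩ := B.exists_resMor_comp_prodMor_comp_shiftDiag G₀ _ _ _ (midMor B L K H)
  refine ⟨g, ?_⟩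
  have hres : A.resApp G₀ (L.prod H) ((A.shift G₀).pComp β α) =
      A.map (B.comp (B.comp (B.resMor G₀ (L.prod H)) (B.prodMor (midMor B L K H) (B.one G₀)))
        (B.toHom (shiftDiag _ _ G₀))) (A.prod (β : A.obj ((L.prod K).prod G₀)) α) := by
    rw [hA.map_comp, hA.map_comp]
    rfl
  rw [hres, hg, hA.map_comp]
  exact congrArg (A.map g) (hA.prod_map _ _ _ _)

/-- `κ_{G₀}(K×H) = ker(Res : A_{G₀}(K×H) → A(K×H))`, as morphisms `H → K` of `𝒫_{A_{G₀}}`. -/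
def kappa (G₀ H K : FGrp) : Submodule k ((A.shift G₀).pHom H K) :=
  LinearMap.ker (hA.mapLinear (B.resMor G₀ (K.prod H)))

lemma mem_kappa {G₀ H K : FGrp} {α : (A.shift G₀).pHom H K} :
    α ∈ hA.kappa G₀ H K ↔ A.resApp G₀ (K.prod H) α = 0 :=
  LinearMap.mem_ker

lemma pComp_mem_kappa_of_left {G₀ H K L : FGrp} (β : (A.shift G₀).pHom K L)
    (α : (A.shift G₀).pHom H K) (hβ : β ∈ hA.kappa G₀ K L) :
    (A.shift G₀).pComp β α ∈ hA.kappa G₀ H L := by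
  obtain ⟨g, hg⟩ := hA.exists_resApp_pComp_eq_map_prod G₀ β α
  rw [mem_kappa, hg, hA.mem_kappa.mp hβ, hA.zero_prod, hA.map_zero]

lemma pComp_mem_kappa_of_right {G₀ H K L : FGrp} (β : (A.shift G₀).pHom K L)
    (α : (A.shift G₀).pHom H K) (hα : α ∈ hA.kappa G₀ H K) :
    (A.shift G₀).pComp β α ∈ hA.kappa G₀ H L := by
  obtain ⟨g, hg⟩ := hA.exists_resApp_pComp_eq_map_prod G₀ β α
  rw [mem_kappa, hg, hA.mem_kappa.mp hα, hA.prod_zero, hA.map_zero]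

end IsGreen

namespace ModData

variable {A : GreenFunData k B} {M : ModData A}

def IsSubfunctor (M : ModData A) (N : ∀ H : FGrp, Submodule k (M.obj H)) : Prop :=
  ∀ (G H : FGrp) (α : A.pHom G H) (x : M.obj G), x ∈ N G → M.act α x ∈ N H

lemma eq_top_of_isSubfunctor
    (hsimple : ∀ N : ∀ H : FGrp, Submodule k (M.obj H), M.IsSubfunctor N →
      (∀ H : FGrp, N H = ⊥) ∨ (∀ H : FGrp, N H = ⊤))
    {N : ∀ H : FGrp, Submodule k (M.obj H)} (hN : M.IsSubfunctor N) {G : FGrp} {x : M.obj G}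
    (hxN : x ∈ N G) (hx : x ≠ 0) : ∀ H : FGrp, N H = ⊤ := by
  refine (hsimple N hN).resolve_left fun hbot => hx ?_
  simpa [hbot G] using hxN

namespace IsMod

variable (hM : M.IsMod)
include hM

lemma act_zero {G H : FGrp} (α : A.pHom G H) : M.act α 0 = 0 := by
  simpa using hM.act_smul α 0 0

def evalLinear {H : FGrp} (s : M.obj H) (K : FGrp) : A.pHom H K →ₗ[k] M.obj K where
  toFun α := M.act α s
  map_add' α α' := hM.add_act α α' s
  map_smul' c α := hM.smul_act c α s

lemma act_eq_zero_of_mem_essIdeal {H : FGrp}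
    (hmin : ∀ K : FGrp, K.card < H.card → ∀ y : M.obj K, y = 0)
    {f : A.pHom H H} (hf : f ∈ A.essIdeal H) (m : M.obj H) : M.act f m = 0 := by
  suffices A.essIdeal H ≤ LinearMap.ker (hM.evalLinear m H) from this hf
  refine Submodule.span_le.mpr ?_
  rintro _ ⟨K, hK, g, h, rfl⟩
  change M.act (A.pComp h g) m = 0
  rw [hM.act_comp, hmin K hK (M.act g m), hM.act_zero]

lemma isSubfunctor_map_evalLinear {H : FGrp} (P : ∀ K : FGrp, Submodule k (A.pHom H K))
    (hP : ∀ {K L : FGrp} (γ : A.pHom K L) (δ : A.pHom H K), δ ∈ P K → A.pComp γ δ ∈ P L)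
    (s : M.obj H) : M.IsSubfunctor fun K => (P K).map (hM.evalLinear s K) := by
  rintro G K γ _ ⟨δ, hδ, rfl⟩
  exact ⟨A.pComp γ δ, hP γ δ hδ, hM.act_comp γ δ s⟩

lemma exists_act_eq_of_ne_zero
    (hsimple : ∀ N : ∀ H : FGrp, Submodule k (M.obj H), M.IsSubfunctor N →
      (∀ H : FGrp, N H = ⊥) ∨ (∀ H : FGrp, N H = ⊤))
    {H : FGrp} {s : M.obj H} (hs : s ≠ 0) (K : FGrp) (x : M.obj K) :
    ∃ δ : A.pHom H K, M.act δ s = x := by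
  have htop := eq_top_of_isSubfunctor hsimple
    (hM.isSubfunctor_map_evalLinear (fun _ => ⊤) (fun _ _ _ => trivial) s)
    ⟨A.pId H, trivial, hM.act_id s⟩ hs
  obtain ⟨δ, -, hδ⟩ := (htop K).ge Submodule.mem_top
  exact ⟨δ, hδ⟩

end IsMod

end ModData

end GreenFunData

open GreenFunData in
theorem simple_not_annihilated_by_kernel_general {k : Type} [CommRing k] {B : BisetCat k}
    (A : GreenFunData k B) (hA : A.IsGreen) (G₀ : FGrp)
    (S : ModData (A.shift G₀)) (hS : S.IsMod)
    -- `S` is simple: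
    (hsimple : ∀ N : ∀ H : FGrp, Submodule k (S.obj H),
      (∀ (G H : FGrp) (α : (A.shift G₀).pHom G H) (x : S.obj G),
        x ∈ N G → S.act α x ∈ N H) →
      (∀ H : FGrp, N H = ⊥) ∨ (∀ H : FGrp, N H = ⊤))
    -- `S` is not annihilated by `κ_{G₀}`:
    (hκ : ∃ (G₁ H₁ : FGrp) (α : (A.shift G₀).pHom G₁ H₁) (x : S.obj G₁),
      A.resApp G₀ (H₁.prod G₁) α = 0 ∧ S.act α x ≠ 0)
    -- `H` is a minimal group for `S`:
    (H : FGrp) (hHnz : ∃ x : S.obj H, x ≠ 0)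
    (hHmin : ∀ K : FGrp, K.card < H.card → ∀ y : S.obj K, y = 0) :
    -- `S(H)` is an `Â_{G₀}(H)`-module ...
    (∀ f ∈ (A.shift G₀).essIdeal H, ∀ m : S.obj H, S.act f m = 0) ∧
    -- ... which is a quotient of `κ̂_{G₀}(H)`:
    ∃ s : S.obj H, ∀ m : S.obj H,
      ∃ y : (A.shift G₀).pHom H H, A.resApp G₀ (H.prod H) y = 0 ∧ S.act y s = m := by
  refine ⟨fun f hf m => hS.act_eq_zero_of_mem_essIdeal hHmin hf m, ?_⟩
  obtain ⟨s, hs⟩ := hHnz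
  obtain ⟨G₁, H₁, α, x, hα, hx⟩ := hκ
  obtain ⟨δ, rfl⟩ := hS.exists_act_eq_of_ne_zero hsimple hs G₁ x
  -- Since `S` is generated by `s`, the subfunctor `κ_{G₀} · s` contains `α · (δ · s) ≠ 0`.
  have htop := ModData.eq_top_of_isSubfunctor hsimple
    (hS.isSubfunctor_map_evalLinear (hA.kappa G₀ H) hA.pComp_mem_kappa_of_right s)
    ⟨_, hA.pComp_mem_kappa_of_left α δ (hA.mem_kappa.mpr hα), hS.act_comp α δ s⟩ hx
  refine ⟨s, fun m => ?_⟩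
  obtain ⟨y, hy, hym⟩ := (htop H).ge (Submodule.mem_top (x := m))
  exact ⟨y, hA.mem_kappa.mp hy, hym⟩

open GreenFunData in
/-- Let `κ_{G₀} = ker(Res : A_{G₀} → A)`.  If `S` is a simple `A_{G₀}`-module
not annihilated by the ideal `κ_{G₀}`, and `H` is a minimal group for `S`, then
`S(H)` is a simple quotient of `κ̂_{G₀}(H)` as `Â_{G₀}(H)`-modules: the ideal
of endomorphisms factoring through smaller groups annihilates `S(H)`, and there
is a generator `s` of `S(H)` such that `y ↦ y·s` maps `κ_{G₀}(H×H)` onto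
`S(H)`. -/
theorem simple_not_annihilated_by_kernel {k : Type} [CommRing k] {B : BisetCat k}
    (A : GreenFunData k B) (hA : A.IsGreen) (G₀ : FGrp)
    (S : ModData (A.shift G₀)) (hS : S.IsMod)
    -- `S` is simple:
    (hnz : ∃ (H : FGrp) (x : S.obj H), x ≠ 0)
    (hsimple : ∀ N : ∀ H : FGrp, Submodule k (S.obj H),
      (∀ (G H : FGrp) (α : (A.shift G₀).pHom G H) (x : S.obj G),
        x ∈ N G → S.act α x ∈ N H) →
      (∀ H : FGrp, N H = ⊥) ∨ (∀ H : FGrp, N H = ⊤))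
    -- `S` is not annihilated by `κ_{G₀}`:
    (hκ : ∃ (G₁ H₁ : FGrp) (α : (A.shift G₀).pHom G₁ H₁) (x : S.obj G₁),
      A.resApp G₀ (H₁.prod G₁) α = 0 ∧ S.act α x ≠ 0)
    -- `H` is a minimal group for `S`:
    (H : FGrp) (hHnz : ∃ x : S.obj H, x ≠ 0)
    (hHmin : ∀ K : FGrp, K.card < H.card → ∀ y : S.obj K, y = 0) :
    -- `S(H)` is an `Â_{G₀}(H)`-module ...
    (∀ f ∈ (A.shift G₀).essIdeal H, ∀ m : S.obj H, S.act f m = 0) ∧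
    -- ... which is a quotient of `κ̂_{G₀}(H)`:
    ∃ s : S.obj H, ∀ m : S.obj H,
      ∃ y : (A.shift G₀).pHom H H, A.resApp G₀ (H.prod H) y = 0 ∧ S.act y s = m :=
  simple_not_annihilated_by_kernel_general A hA G₀ S hS hsimple hκ H hHnz hHmin
end

section
/- Let H be a nontrivial finite cyclic group, k a commutative ring, and F a field of characteristic zero containing a primitive |H|-th root of unity. Then every element of the representation ring k⊗R_F(H×H), viewed as an endomorphism of H in the associated category of the Green biset functor kR_F, factors through a group of order strictly smaller than |H|; that is, the essential algebra of kR_F at H vanishes. -/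
variable {k : Type} [CommRing k]

/-- A finite-dimensional `F`-linear representation of a group `G`, bundled. -/
structure FDRepW (F : Type) [Field F] (G : Type) [Group G] : Type 1 where
  V : Type
  [instAdd : AddCommGroup V]
  [instMod : Module F V]
  [instFin : FiniteDimensional F V]
  ρ : Representation F G V

attribute [instance] FDRepW.instAdd FDRepW.instMod FDRepW.instFin

variable {F : Type} [Field F]

/-- Irreducibility of a representation: it is nonzero and has no nontrivial
proper invariant subspace. -/
def FDRepW.Irreducible {G : Type} [Group G] (W : FDRepW F G) : Prop :=
  Nontrivial W.V ∧
    ∀ p : Submodule F W.V, (∀ (g : G) (v : W.V), v ∈ p → W.ρ g v ∈ p) → p = ⊥ ∨ p = ⊤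

/-- Restriction of a representation along a group homomorphism. -/
def FDRepW.res {G G' : Type} [Group G] [Group G'] (W : FDRepW F G) (ψ : G' →* G) :
    FDRepW F G' :=
  { V := W.V, ρ := W.ρ.comp ψ }

/-- The external tensor product of representations of `G` and `G'`, a
representation of `G × G'`. -/
noncomputable def FDRepW.ext {G G' : Type} [Group G] [Group G']
    (W : FDRepW F G) (W' : FDRepW F G') : FDRepW F (G × G') :=
  { V := TensorProduct F W.V W'.V,
    ρ := Representation.tprod (W.ρ.comp (MonoidHom.fst G G')) (W'.ρ.comp (MonoidHom.snd G G')) }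

/-! Composition in `𝒫_A` through the trivial group turns `a × ε : 1 → H` and a suitable
`g : H → 1` into the external product `a × b`, so every `A.prod a b ∈ A(H × H)` lies in the
essential ideal. As `H × H` is abelian of exponent dividing `|H|` and `F` contains a primitive
`|H|`-th root of unity, every irreducible representation `W` of `H × H` acts through a character
`χ`. Since `cls` need not be invariant under isomorphism, `W` cannot be replaced by a tensor
product of representations of `H`; but for any representation `E` of the trivial group, `E ⊗ W`
restricted along `H × H ≅ 1 × (H × H)` is literally the external product of `E.V` with `χ(·, 1)`
and `W.V` with `χ(1, ·)`. By the unit axiom every class in `A(H × H)` is such a restriction of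
some `ε × z`, and `ε`, `z` expand in classes of irreducible representations. -/

instance : Unique FGrp.unit.carrier := inferInstanceAs (Unique PUnit)

namespace FGrp

def lUnitInv (G : FGrp) : G.carrier →* (FGrp.unit.prod G).carrier :=
  (1 : G.carrier →* FGrp.unit.carrier).prod (MonoidHom.id G.carrier)

lemma lUnitInv_comp_lUnitHom (G : FGrp) :
    (lUnitInv G).comp (lUnitHom G) = MonoidHom.id (FGrp.unit.prod G).carrier :=
  MonoidHom.ext fun _ => Prod.ext (Subsingleton.elim _ _) rfl

lemma card_unit : FGrp.unit.card = 1 :=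
  Nat.card_unique

lemma card_unit_lt (G : FGrp) [Nontrivial G.carrier] : FGrp.unit.card < G.card := by
  rw [card_unit]
  exact Finite.one_lt_card

end FGrp

namespace BisetCat

variable (B : BisetCat k)

lemma arrowL_unit : B.arrowL FGrp.unit = B.toHom FGrp.unit.diag := by
  rw [arrowL, show FGrp.unit.toUnit = MonoidHom.id _ from MonoidHom.ext fun _ => rfl,
    fromHom_id, one_comp]

/-- Not known to be the identity, since the axioms do not relate `toHom` and `fromHom`; it only
has a right inverse. -/
def unitTwist : B.Mor FGrp.unit FGrp.unit :=
  B.comp (B.arrowL FGrp.unit) (B.fromHom (FGrp.lUnitInv FGrp.unit))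

def unitTwistInv : B.Mor FGrp.unit FGrp.unit :=
  B.comp (B.fromHom (FGrp.lUnitHom FGrp.unit)) (B.toHom (FGrp.lUnitHom FGrp.unit))

lemma unitTwist_comp_unitTwistInv : B.comp B.unitTwist B.unitTwistInv = B.one FGrp.unit := by
  rw [unitTwist, unitTwistInv, arrowL_unit, comp_assoc, ← B.comp_assoc (B.fromHom _),
    ← fromHom_comp, FGrp.lUnitInv_comp_lUnitHom, fromHom_id, one_comp, ← toHom_comp,
    show (FGrp.lUnitHom FGrp.unit).comp FGrp.unit.diag = MonoidHom.id _ from rfl, toHom_id]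

end BisetCat

namespace GreenFunData

variable {B : BisetCat k} {A : GreenFunData k B}

lemma midMor_unit (H : FGrp) :
    midMor B H FGrp.unit H
      = B.comp (B.fromHom ((MonoidHom.id H.carrier).prodMap (FGrp.lUnitHom H)))
          (B.comp (B.prodMor (B.one H) (B.prodMor (B.arrowL FGrp.unit) (B.one H)))
            (B.comp (B.fromHom ((MonoidHom.id H.carrier).prodMap
                (FGrp.assocHom FGrp.unit FGrp.unit H)))
              (B.fromHom (FGrp.assocHom' H FGrp.unit (FGrp.unit.prod H))))) :=
  congrArg (B.comp _) (congrArg (B.comp _)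
    (B.fromHom_comp (L := H.prod ((FGrp.unit.prod FGrp.unit).prod H))
      (FGrp.assocHom' H FGrp.unit (FGrp.unit.prod H))
      ((MonoidHom.id H.carrier).prodMap (FGrp.assocHom FGrp.unit FGrp.unit H))))

namespace IsGreen

def mapₗ (hA : A.IsGreen) {G H : FGrp} (f : B.Mor G H) : A.obj G →ₗ[k] A.obj H where
  toFun := A.map f
  map_add' := hA.map_add f
  map_smul' := hA.map_smul f

def prodₗ (hA : A.IsGreen) (G H : FGrp) : A.obj G →ₗ[k] A.obj H →ₗ[k] A.obj (G.prod H) :=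
  LinearMap.mk₂ k A.prod hA.prod_add_left hA.prod_smul_left hA.prod_add_right hA.prod_smul_right

lemma map_fromHom_fromHom_of_comp_eq_id (hA : A.IsGreen) {G G' : FGrp}
    {ψ : G.carrier →* G'.carrier} {φ : G'.carrier →* G.carrier}
    (h : φ.comp ψ = MonoidHom.id G.carrier) (x : A.obj G) :
    A.map (B.fromHom φ) (A.map (B.fromHom ψ) x) = x := by
  rw [← hA.map_comp, ← B.fromHom_comp, h, B.fromHom_id, hA.map_one]

lemma map_fromHom_lUnitInv (hA : A.IsGreen) {G : FGrp} (x : A.obj G) :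
    A.map (B.fromHom (FGrp.lUnitInv G)) x = A.prod A.eps x := by
  conv_lhs => rw [← hA.prod_lunit x]
  exact hA.map_fromHom_fromHom_of_comp_eq_id (FGrp.lUnitInv_comp_lUnitHom G) _

lemma prod_eps_map_fromHom_lUnitHom (hA : A.IsGreen) {G : FGrp}
    (y : A.obj (FGrp.unit.prod G)) :
    A.prod A.eps (A.map (B.fromHom (FGrp.lUnitHom G)) y) = y := by
  rw [← hA.map_fromHom_lUnitInv,
    hA.map_fromHom_fromHom_of_comp_eq_id (FGrp.lUnitInv_comp_lUnitHom G)]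

lemma map_prodMor_one_prod (hA : A.IsGreen) {G H H' : FGrp} (f : B.Mor H H') (a : A.obj G)
    (x : A.obj H) :
    A.map (B.prodMor (B.one G) f) (A.prod a x) = A.prod a (A.map f x) := by
  rw [hA.prod_map, hA.map_one]

lemma map_fromHom_prodMap_id_prod (hA : A.IsGreen) {G H H' : FGrp}
    (ψ : H.carrier →* H'.carrier) (a : A.obj G) (x : A.obj H) :
    A.map (B.fromHom ((MonoidHom.id G.carrier).prodMap ψ)) (A.prod a x)
      = A.prod a (A.map (B.fromHom ψ) x) := by
  rw [← B.prodMor_fromHom, B.fromHom_id, hA.map_prodMor_one_prod]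

lemma pComp_prod_eps (hA : A.IsGreen) {H : FGrp} (a : A.obj H) (g : A.pHom H FGrp.unit) :
    A.pComp (A.prod a A.eps) g
      = A.prod a (A.map (B.fromHom (FGrp.lUnitHom H))
          (A.map (B.prodMor B.unitTwist (B.one H)) g)) := by
  have hreassoc : A.map (B.fromHom ((MonoidHom.id H.carrier).prodMap
        (FGrp.assocHom FGrp.unit FGrp.unit H)))
      (A.map (B.fromHom (FGrp.assocHom' H FGrp.unit (FGrp.unit.prod H)))
        (A.prod (A.prod a A.eps) g))
      = A.prod a (A.map (B.prodMor (B.fromHom (FGrp.lUnitInv FGrp.unit)) (B.one H)) g) := by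
    rw [hA.prod_assoc, hA.map_fromHom_fromHom_of_comp_eq_id rfl, hA.map_fromHom_prodMap_id_prod,
      ← hA.map_fromHom_lUnitInv, ← hA.map_comp, ← B.fromHom_comp, ← B.fromHom_id H,
      B.prodMor_fromHom]
    rfl
  rw [pComp, midMor_unit, hA.map_comp, hA.map_comp, hA.map_comp, hreassoc,
    hA.map_prodMor_one_prod, ← hA.map_comp (B.prodMor _ _), ← B.prodMor_comp, B.comp_one,
    ← BisetCat.unitTwist, hA.map_fromHom_prodMap_id_prod]

lemma prod_mem_essIdeal (hA : A.IsGreen) {H : FGrp} (hH : FGrp.unit.card < H.card)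
    (a b : A.obj H) : A.prod a b ∈ A.essIdeal H := by
  let g := A.map (B.prodMor B.unitTwistInv (B.one H)) (A.prod A.eps b)
  have hfactor : A.pComp (A.prod a A.eps) g = A.prod a b := by
    rw [hA.pComp_prod_eps, ← hA.map_comp (B.prodMor _ _), ← B.prodMor_comp,
      B.unitTwist_comp_unitTwistInv, B.comp_one, B.prodMor_one, hA.map_one, hA.prod_lunit]
  exact Submodule.subset_span ⟨FGrp.unit, hH, g, A.prod a A.eps, hfactor.symm⟩

end IsGreen

end GreenFunData

def Representation.scalar (V : Type) [AddCommGroup V] [Module F V] {G : Type} [Group G]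
    (χ : G →* F) : Representation F G V :=
  (algebraMap F (Module.End F V) : F →* Module.End F V).comp χ

lemma Module.End.exists_hasEigenvalue_of_pow_eq_one {V : Type} [AddCommGroup V] [Module F V]
    [FiniteDimensional F V] [Nontrivial V] {f : Module.End F V} {n : ℕ} (hn : n ≠ 0)
    (hf : f ^ n = 1) {ζ : F} (hζ : IsPrimitiveRoot ζ n) : ∃ μ, f.HasEigenvalue μ := by
  have hdvd : minpoly F f ∣ Polynomial.X ^ n - Polynomial.C 1 :=
    minpoly.dvd F f (by simp [hf])
  have hsplits := (Polynomial.X_pow_sub_one_splits hζ).of_dvd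
    (Polynomial.X_pow_sub_C_ne_zero (Nat.pos_of_ne_zero hn) 1) hdvd
  obtain ⟨μ, hμ⟩ :=
    hsplits.exists_eval_eq_zero (minpoly.degree_pos (IsIntegral.of_finite F f)).ne'
  exact ⟨μ, Module.End.hasEigenvalue_iff_isRoot.mpr hμ⟩

namespace FDRepW

section Irreducible

variable {G : Type} [Group G] {W : FDRepW F G}

lemma Irreducible.eq_algebraMap_of_commute (hW : W.Irreducible) {f : Module.End F W.V}
    (hf : ∀ g, Commute f (W.ρ g)) {μ : F} (hμ : f.HasEigenvalue μ) :
    f = algebraMap F _ μ := by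
  have hinv : ∀ (g : G) (v : W.V), v ∈ f.eigenspace μ → W.ρ g v ∈ f.eigenspace μ := by
    intro g v hv
    rw [Module.End.mem_eigenspace_iff] at hv ⊢
    rw [← Module.End.mul_apply, (hf g).eq, Module.End.mul_apply, hv, map_smul]
  obtain hbot | htop := hW.2 _ hinv
  · exact absurd hbot hμ
  · ext v
    have hv : v ∈ f.eigenspace μ := htop ▸ Submodule.mem_top
    simpa using Module.End.mem_eigenspace_iff.mp hv

lemma Irreducible.exists_character [IsMulCommutative G] (hW : W.Irreducible) {n : ℕ}
    (hn : n ≠ 0) (hpow : ∀ g : G, g ^ n = 1) {ζ : F} (hζ : IsPrimitiveRoot ζ n) :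
    ∃ χ : G →* F, W.ρ = Representation.scalar W.V χ := by
  have := hW.1
  have hscalar (g : G) : ∃ μ, W.ρ g = algebraMap F _ μ := by
    obtain ⟨μ, hμ⟩ := Module.End.exists_hasEigenvalue_of_pow_eq_one (f := W.ρ g) hn
      (by rw [← map_pow, hpow, map_one]) hζ
    exact ⟨μ, hW.eq_algebraMap_of_commute
      (fun h => by rw [Commute, SemiconjBy, ← map_mul, ← map_mul, mul_comm']) hμ⟩
  choose χ hχ using hscalar
  have hinj := (algebraMap F (Module.End F W.V)).injective
  refine ⟨⟨⟨χ, hinj ?_⟩, fun g h => hinj ?_⟩, MonoidHom.ext hχ⟩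
  · rw [← hχ, map_one, map_one]
  · rw [← hχ, map_mul, map_mul, hχ, hχ]

end Irreducible

lemma ext_res_lUnitInv_of_eq_scalar {H K : FGrp} (E : FDRepW F FGrp.unit.carrier)
    {W : FDRepW F (H.prod K).carrier} {χ : (H.prod K).carrier →* F}
    (hW : W.ρ = Representation.scalar W.V χ) :
    (E.ext W).res (FGrp.lUnitInv (H.prod K))
      = FDRepW.ext ⟨E.V, Representation.scalar E.V (χ.comp (MonoidHom.inl _ _))⟩
          ⟨W.V, Representation.scalar W.V (χ.comp (MonoidHom.inr _ _))⟩ := by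
  unfold res FDRepW.ext
  congr 1
  ext ⟨a, b⟩ : 1
  refine TensorProduct.ext' fun x y => ?_
  change TensorProduct.map (E.ρ 1) (W.ρ (a, b)) (x ⊗ₜ y)
    = TensorProduct.map (algebraMap F _ (χ (a, 1))) (algebraMap F _ (χ (1, b))) (x ⊗ₜ y)
  have hχ : χ (a, b) = χ (a, 1) * χ (1, b) :=
    (congrArg χ (Prod.ext (mul_one a).symm (one_mul b).symm :
      ((a, b) : (H.prod K).carrier) = (a, 1) * (1, b))).trans (map_mul χ _ _)
  rw [TensorProduct.map_tmul, TensorProduct.map_tmul, map_one, hW]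
  change x ⊗ₜ (algebraMap F (Module.End F W.V) (χ (a, b)) y) = _
  rw [hχ]
  simp [Algebra.algebraMap_eq_smul_one, TensorProduct.smul_tmul', TensorProduct.tmul_smul,
    smul_smul, mul_comm]

end FDRepW

theorem repFunctor_essAlgebra_vanishes_general {k : Type} [CommRing k]
    {B : BisetCat k} (A : GreenFunData k B) (hA : A.IsGreen)
    (cls : ∀ U : FGrp, FDRepW F U.carrier → A.obj U)
    (hspan : ∀ U : FGrp,
      Submodule.span k {x : A.obj U | ∃ W : FDRepW F U.carrier, W.Irreducible ∧ x = cls U W}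
        = ⊤)
    (hres : ∀ (U U' : FGrp) (ψ : U.carrier →* U'.carrier) (W : FDRepW F U'.carrier),
      A.map (B.toHom ψ) (cls U' W) = cls U (W.res ψ))
    (hext : ∀ (U U' : FGrp) (W : FDRepW F U.carrier) (W' : FDRepW F U'.carrier),
      A.prod (cls U W) (cls U' W') = cls (U.prod U') (FDRepW.ext W W'))
    (H : FGrp) (hcyc : IsCyclic H.carrier) (hnt : Nontrivial H.carrier)
    (ζ : F) (hζ : IsPrimitiveRoot ζ (Nat.card H.carrier)) :
    A.essIdeal H = ⊤ := by
  let Φ := (hA.prodₗ FGrp.unit (H.prod H)).compr₂ (hA.mapₗ (B.toHom (FGrp.lUnitInv (H.prod H))))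
  have hΦ : Submodule.map₂ Φ ⊤ ⊤ ≤ A.essIdeal H := by
    rw [← hspan, ← hspan, Submodule.map₂_span_span, Submodule.span_le]
    rintro _ ⟨_, ⟨E, -, rfl⟩, _, ⟨W, hW, rfl⟩, rfl⟩
    have : IsMulCommutative (H.prod H).carrier := inferInstanceAs (IsMulCommutative (_ × _))
    obtain ⟨χ, hχ⟩ := hW.exists_character Nat.card_pos.ne'
      (fun g => Prod.ext pow_card_eq_one' pow_card_eq_one') hζ
    change A.map _ (A.prod _ _) ∈ _
    rw [hext, hres _ (FGrp.unit.prod (H.prod H)) _ (E.ext W)]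
    have hsplit := (hext H H _ _).trans (congrArg (cls _) (E.ext_res_lUnitInv_of_eq_scalar hχ)).symm
    exact hsplit ▸ hA.prod_mem_essIdeal (FGrp.card_unit_lt H) _ _
  rw [eq_top_iff, ← hspan, Submodule.span_le]
  rintro _ ⟨Ω, -, rfl⟩
  have hΩ : cls _ Ω
      = Φ A.eps (A.map (B.fromHom (FGrp.lUnitHom _)) (cls _ (Ω.res (FGrp.lUnitHom _)))) := by
    change _ = A.map _ (A.prod _ _)
    rw [hA.prod_eps_map_fromHom_lUnitHom, hres]
    rfl
  exact hΩ ▸ Submodule.map₂_le.mp hΦ _ trivial _ trivial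

/-- Let `kR_F` be the Green biset functor of `F`-linear representations (char
`F = 0`), described by classes `cls(ρ) ∈ A(U)` of finite-dimensional
representations, spanning each `A(U)`, compatible with restriction/inflation
along group homomorphisms and with external products.  If `H` is a nontrivial
finite cyclic group and `F` contains a primitive `|H|`-th root of unity, then
every element of `A(H×H) = End_{𝒫_A}(H)` factors through a group of order
`< |H|`, i.e. the essential algebra of `kR_F` at `H` vanishes. -/
theorem repFunctor_essAlgebra_vanishes {k : Type} [CommRing k] [CharZero F]
    {B : BisetCat k} (A : GreenFunData k B) (hA : A.IsGreen)
    (cls : ∀ U : FGrp, FDRepW F U.carrier → A.obj U)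
    (hspan : ∀ U : FGrp,
      Submodule.span k {x : A.obj U | ∃ W : FDRepW F U.carrier, W.Irreducible ∧ x = cls U W}
        = ⊤)
    (hres : ∀ (U U' : FGrp) (ψ : U.carrier →* U'.carrier) (W : FDRepW F U'.carrier),
      A.map (B.toHom ψ) (cls U' W) = cls U (W.res ψ))
    (hext : ∀ (U U' : FGrp) (W : FDRepW F U.carrier) (W' : FDRepW F U'.carrier),
      A.prod (cls U W) (cls U' W') = cls (U.prod U') (FDRepW.ext W W'))
    (H : FGrp) (hcyc : IsCyclic H.carrier) (hnt : Nontrivial H.carrier)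
    (ζ : F) (hζ : IsPrimitiveRoot ζ (Nat.card H.carrier)) :
    A.essIdeal H = ⊤ :=
  repFunctor_essAlgebra_vanishes_general A hA cls hspan hres hext H hcyc hnt ζ hζ
end
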